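/- Suppose deg t_i = 2 and deg s_i^m = 2m+1 (case (0)) and r ≥ 3. Then every degree-preserving map γ: K_r(m) → K_r(0) of differential R-modules lifting the canonical projection H(K_r(m)) = R/(t_1^{m+1},...,t_r^{m+1}) → H(K_r(0)) = k is injective on the free R-submodule of K_r(m) generated by the r+1 elements s_1^m, ..., s_r^m, s_1^m∧s_2^m∧s_3^m. -/

import Mathlib

/-!
Write `x = b • s₁s₂s₃ + ∑ aᵢ • sᵢ` and `c = m + 1`; degree and the lifting condition force
`γ 1 = 1`. If `b ≠ 0`, applying `γ d = d γ` to `x` shows that `γ(d(s₁s₂s₃))` vanishes in positive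
word length. Then `t₁ᶜ γ(s₂s₃) ∈ (t₂ᶜ, t₃ᶜ)` componentwise, so `γ(s₂s₃) = t₂ᶜ α + t₃ᶜ β`;
comparing with `d γ(s₂s₃) = t₂ᶜ γ(s₃) - t₃ᶜ γ(s₂)` and counting degrees gives `γ(s₃) = d α` in
word length one, whence `t₃ᶜ = (d γ(s₃))_∅ = (d d α)_∅ = 0`. So `b = 0`, and `∑ aᵢ γ(sᵢ) = 0`
says `a G = 0` for the matrix `G` of `γ` on the `sᵢ`. Since `G t = tᶜ`, `G = diag(tᵢᵐ) + B` with
`B t = 0`, and expanding the determinant row by row shows that `∏ tᵢᵐ` occurs in `det G` with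
coefficient one; hence `a = 0`.
-/

open MvPolynomial

/-- The underlying `R`-module of the Koszul complex `K_r(m)`. -/
abbrev Kmod (k : Type*) [Field k] (r : ℕ) := Finset (Fin r) → MvPolynomial (Fin r) k

/-- Basis element corresponding to the exterior monomial `⋀_{i ∈ S} sᵢ`. -/
noncomputable def eK (k : Type*) [Field k] {r : ℕ} (S : Finset (Fin r)) : Kmod k r :=
  Pi.single S 1

/-- The Koszul differential of `K_r(m)`. -/
noncomputable def koszulD (k : Type*) [Field k] (r m : ℕ) :
    Kmod k r →ₗ[MvPolynomial (Fin r) k] Kmod k r :=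
  LinearMap.pi fun S => ∑ i ∈ Sᶜ,
    (((-1 : MvPolynomial (Fin r) k) ^ (S.filter (fun j => j < i)).card) * X i ^ (m + 1)) •
      LinearMap.proj (insert i S)

/-- Homogeneity of total degree `n` in `K_r(m)` for case (0): `deg tᵢ = 2`,
`deg sᵢ^m = 2m+1` (every monomial `t^d` of `f S` satisfies `2|d| + (2m+1)|S| = n`). -/
def IsHomogC {k : Type*} [Field k] {r : ℕ} (m : ℕ) (n : ℕ) (f : Kmod k r) : Prop :=
  ∀ S : Finset (Fin r), ∀ d ∈ (f S).support,
    2 * (d.sum fun _ e => e) + (2 * m + 1) * S.card = n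

theorem Finset.sum_sum_erase_eq_zero_of_antisymm {ι M : Type*} [DecidableEq ι] [AddCommGroup M]
    {s : Finset ι} {g : ι → ι → M} (hg : ∀ i ∈ s, ∀ j ∈ s, i ≠ j → g j i = -g i j) :
    ∑ i ∈ s, ∑ j ∈ s.erase i, g i j = 0 := by
  rw [Finset.sum_sigma']
  refine Finset.sum_involution (fun p _ => ⟨p.2, p.1⟩) ?_ ?_ ?_ ?_
  · rintro ⟨i, j⟩ hp
    simp only [Finset.mem_sigma, Finset.mem_erase] at hp
    rw [hg i hp.1 j hp.2.2 (Ne.symm hp.2.1), add_neg_cancel]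
  · rintro ⟨i, j⟩ hp -
    simp only [Finset.mem_sigma, Finset.mem_erase] at hp
    simpa [eq_comm] using hp.2.1
  · rintro ⟨i, j⟩ hp
    simp only [Finset.mem_sigma, Finset.mem_erase] at hp ⊢
    exact ⟨hp.2.2, Ne.symm hp.2.1, hp.1⟩
  · intro p _
    rfl

namespace MvPolynomial

section Monomials
variable {σ R : Type*} [CommSemiring R]

theorem exists_mem_support_of_mem_support_X_pow_mul {i : σ} {c : ℕ} {p : MvPolynomial σ R}
    {d : σ →₀ ℕ} (hd : d ∈ (X i ^ c * p).support) :
    ∃ e ∈ p.support, d = Finsupp.single i c + e := by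
  rw [X_pow_eq_monomial, mem_support_iff, coeff_monomial_mul'] at hd
  split_ifs at hd with h
  · exact ⟨d - Finsupp.single i c, mem_support_iff.mpr (by simpa using hd),
      (add_tsub_cancel_of_le h).symm⟩
  · exact absurd rfl hd

/-- `(X j₁ ^ c, X j₂ ^ c)` is saturated with respect to `X j₀`: a monomial of `A` divisible by
neither `X j₁ ^ c` nor `X j₂ ^ c` would survive in `X j₀ ^ c * A`. -/
theorem eq_X_pow_mul_add_X_pow_mul_of_X_pow_mul_eq {j₀ j₁ j₂ : σ} (h₁ : j₀ ≠ j₁)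
    (h₂ : j₀ ≠ j₂) {c : ℕ} {A B C : MvPolynomial σ R}
    (h : X j₀ ^ c * A = X j₁ ^ c * B + X j₂ ^ c * C) :
    A = X j₁ ^ c * A.divMonomial (Finsupp.single j₁ c) +
      X j₂ ^ c * (A.modMonomial (Finsupp.single j₁ c)).divMonomial (Finsupp.single j₂ c) := by
  classical
  have hrem : (A.modMonomial (Finsupp.single j₁ c)).modMonomial (Finsupp.single j₂ c) = 0 := by
    ext d
    rw [coeff_zero]
    by_cases hd₂ : Finsupp.single j₂ c ≤ d
    · exact coeff_modMonomial_of_le _ hd₂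
    rw [coeff_modMonomial_of_not_le _ hd₂]
    by_cases hd₁ : Finsupp.single j₁ c ≤ d
    · exact coeff_modMonomial_of_le _ hd₁
    rw [coeff_modMonomial_of_not_le _ hd₁]
    have := congrArg (coeff (Finsupp.single j₀ c + d)) h
    rw [coeff_add, X_pow_eq_monomial, X_pow_eq_monomial, X_pow_eq_monomial, coeff_monomial_mul,
      one_mul, coeff_monomial_mul', coeff_monomial_mul', if_neg, if_neg, add_zero] at this
    · exact this
    · rw [Finsupp.single_le_iff, Finsupp.add_apply, Finsupp.single_apply, if_neg h₂, zero_add]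
      exact fun h => hd₂ (Finsupp.single_le_iff.mpr h)
    · rw [Finsupp.single_le_iff, Finsupp.add_apply, Finsupp.single_apply, if_neg h₁, zero_add]
      exact fun h => hd₁ (Finsupp.single_le_iff.mpr h)
  conv_lhs => rw [← divMonomial_add_modMonomial A (Finsupp.single j₁ c),
    ← divMonomial_add_modMonomial (A.modMonomial _) (Finsupp.single j₂ c), hrem, add_zero]
  simp only [X_pow_eq_monomial]

theorem eq_zero_of_X_pow_mul_eq_X_pow_mul {j₁ j₂ : σ} (hne : j₁ ≠ j₂) {c : ℕ}
    {P Q : MvPolynomial σ R} (hP : ∀ ν ∈ P.support, ν j₂ < c)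
    (h : X j₁ ^ c * P = X j₂ ^ c * Q) : P = 0 := by
  classical
  ext ν
  rw [coeff_zero]
  by_contra hν
  have := congrArg (coeff (Finsupp.single j₁ c + ν)) h
  rw [X_pow_eq_monomial, X_pow_eq_monomial, coeff_monomial_mul, one_mul, coeff_monomial_mul',
    if_neg] at this
  · exact hν this
  rw [Finsupp.single_le_iff, Finsupp.add_apply, Finsupp.single_apply, if_neg hne, zero_add]
  exact not_le.mpr (hP ν (mem_support_iff.mpr hν))

theorem coeff_aeval_piecewise_zero_X {s : Finset σ} [DecidablePred (· ∈ s)] {κ : σ →₀ ℕ}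
    (hκ : ∀ j ∈ s, κ j = 0) (p : MvPolynomial σ R) :
    coeff κ (aeval (s.piecewise 0 X) p) = coeff κ p := by
  classical
  induction p using MvPolynomial.induction_on generalizing κ with
  | C a => simp [algebraMap_eq]
  | add p q hp hq => simp only [map_add, coeff_add, hp hκ, hq hκ]
  | mul_X p j hp =>
    rw [_root_.map_mul, aeval_X, coeff_mul_X']
    by_cases hj : j ∈ s
    · rw [Finset.piecewise_eq_of_mem _ _ _ hj, Pi.zero_apply, mul_zero, coeff_zero,
        if_neg (by simpa using hκ j hj)]
    · rw [Finset.piecewise_eq_of_notMem _ _ _ hj, coeff_mul_X']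
      split_ifs
      · exact hp fun j' hj' => by rw [Finsupp.tsub_apply, hκ j' hj', Nat.zero_sub]
      · rfl

end Monomials

section Determinant
open Matrix
variable {σ R : Type*} [Fintype σ] [DecidableEq σ] [CommRing R]

theorem aeval_piecewise_zero_X_det_eq_zero [IsDomain R] {s : Finset σ} (hs : s ≠ Finset.univ)
    {M : Matrix σ σ (MvPolynomial σ R)} (hM : M *ᵥ (fun j => X j) = s.piecewise X 0) :
    aeval (R := R) (s.piecewise 0 (X : σ → MvPolynomial σ R)) M.det = 0 := by
  set ρ := (aeval (R := R) (s.piecewise 0 (X : σ → MvPolynomial σ R))).toRingHom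
  obtain ⟨j₀, hj₀⟩ : ∃ j₀, j₀ ∉ s := by
    by_contra! h
    exact hs (Finset.eq_univ_iff_forall.mpr h)
  change ρ _ = 0
  rw [RingHom.map_det, ← exists_mulVec_eq_zero_iff]
  refine ⟨ρ ∘ fun j => X j, fun h => X_ne_zero (R := R) j₀ ?_, ?_⟩
  · simpa [ρ, Finset.piecewise_eq_of_notMem _ _ _ hj₀] using congrFun h j₀
  · funext i
    rw [RingHom.mapMatrix_apply, ← RingHom.map_mulVec, hM, Pi.zero_apply]
    by_cases hi : i ∈ s <;> simp [ρ, hi]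

/-- After pulling `X i ^ m` out of the rows in `s`, the monomial sought does not involve the
variables in `s`, and setting those to zero makes `X` (restricted to `sᶜ`) a kernel vector. -/
theorem coeff_det_ite_diagonal_eq_zero [IsDomain R] {m : ℕ} {s : Finset σ}
    (hs : s ≠ Finset.univ) {B : Matrix σ σ (MvPolynomial σ R)} (hB : B *ᵥ (fun j => X j) = 0) :
    coeff (∑ i, Finsupp.single i m)
      (of fun i j => if i ∈ s then diagonal (fun i => X i ^ m) i j else B i j).det = 0 := by
  set M : Matrix σ σ (MvPolynomial σ R) :=
    of fun i j => if i ∈ s then (1 : Matrix σ σ _) i j else B i j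
  have hscale : (of fun i j => if i ∈ s then diagonal (fun i => X i ^ m) i j else B i j) =
      of fun i j => (if i ∈ s then X i ^ m else 1) * M i j := by
    refine Matrix.ext fun i j => ?_
    by_cases hi : i ∈ s <;> simp [M, hi, diagonal, one_apply]
  have hM : M *ᵥ (fun j => X j) = s.piecewise X 0 := by
    funext i
    by_cases hi : i ∈ s
    · simp [M, mulVec, hi, one_apply, dotProduct]
    · simpa [M, mulVec, hi] using congrFun hB i
  simp_rw [hscale, det_mul_column, Finset.prod_ite_mem, Finset.univ_inter, X_pow_eq_monomial]
  rw [← monomial_sum_one, ← Finset.sum_add_sum_compl s, coeff_monomial_mul, one_mul,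
    ← coeff_aeval_piecewise_zero_X (s := s) _ M.det, aeval_piecewise_zero_X_det_eq_zero hs hM,
    coeff_zero]
  intro j hj
  rw [Finsupp.finsetSum_apply]
  exact Finset.sum_eq_zero fun i hi =>
    Finsupp.single_eq_of_ne (fun h => Finset.mem_compl.mp hi (h ▸ hj))

theorem coeff_det_eq_one_of_mulVec_X_eq [IsDomain R] {m : ℕ} {G : Matrix σ σ (MvPolynomial σ R)}
    (hG : G *ᵥ (fun j => X j) = fun i => X i ^ (m + 1)) :
    coeff (∑ i, Finsupp.single i m) G.det = 1 := by
  set D : Matrix σ σ (MvPolynomial σ R) := diagonal fun i => X i ^ m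
  set B := G - D
  have hB : B *ᵥ (fun j => X j) = 0 := by
    funext i
    simp [B, D, sub_mulVec, hG, mulVec_diagonal, pow_succ]
  have hexpand : G.det = ∑ s : Finset σ, det (of fun i j => if i ∈ s then D i j else B i j) := by
    rw [show G = D + B by simp [B]]
    refine ((detRowAlternating (R := MvPolynomial σ R) (n := σ)).map_add_univ D B).trans
      (Finset.sum_congr rfl fun s _ => ?_)
    congr 1
    funext i j
    by_cases hi : i ∈ s <;> simp [Finset.piecewise, hi]
  rw [hexpand, coeff_sum, Finset.sum_eq_single Finset.univ]
  · simp only [Finset.mem_univ, if_true]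
    change coeff _ (det D) = 1
    simp_rw [D, det_diagonal, X_pow_eq_monomial]
    rw [← monomial_sum_one, coeff_monomial, if_pos rfl]
  · exact fun s _ hs => coeff_det_ite_diagonal_eq_zero hs hB
  · simp

end Determinant

end MvPolynomial

section Koszul
variable {k : Type*} [Field k] {r m : ℕ}

lemma eK_apply (S T : Finset (Fin r)) : eK k S T = if T = S then 1 else 0 := by
  simp [eK, Pi.single_apply]

lemma koszulD_apply (f : Kmod k r) (T : Finset (Fin r)) :
    koszulD k r m f T = ∑ i ∈ Tᶜ,
      (-1 : MvPolynomial (Fin r) k) ^ (T.filter (· < i)).card * X i ^ (m + 1) *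
        f (insert i T) := by
  simp [koszulD, LinearMap.pi_apply, LinearMap.sum_apply, smul_eq_mul]

lemma koszulD_apply_empty (f : Kmod k r) :
    koszulD k r m f ∅ = ∑ j, X j ^ (m + 1) * f {j} := by
  simp [koszulD_apply]

lemma koszulD_eK (S : Finset (Fin r)) :
    koszulD k r m (eK k S) = ∑ i ∈ S,
      ((-1 : MvPolynomial (Fin r) k) ^ ((S.erase i).filter (· < i)).card * X i ^ (m + 1)) •
        eK k (S.erase i) := by
  funext T
  simp only [koszulD_apply, Finset.sum_apply, Pi.smul_apply, eK_apply, smul_eq_mul, mul_ite,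
    mul_one, mul_zero]
  rw [← Finset.sum_filter, ← Finset.sum_filter]
  refine Finset.sum_congr ?_ fun i hi => ?_
  · ext i
    simp only [Finset.mem_filter, Finset.mem_compl]
    constructor
    · rintro ⟨hi, rfl⟩
      exact ⟨Finset.mem_insert_self i T, (Finset.erase_insert hi).symm⟩
    · rintro ⟨hi, rfl⟩
      exact ⟨Finset.notMem_erase i S, Finset.insert_erase hi⟩
  · obtain ⟨-, rfl⟩ := Finset.mem_filter.mp hi
    rfl

lemma koszulD_eK_empty : koszulD k r m (eK k ∅) = 0 := by
  simp [koszulD_eK]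

lemma koszulD_eK_singleton (i : Fin r) :
    koszulD k r m (eK k {i}) = (X i ^ (m + 1) : MvPolynomial (Fin r) k) • eK k ∅ := by
  simp [koszulD_eK]

lemma koszulD_eK_pair {i j : Fin r} (hij : i < j) :
    koszulD k r m (eK k {i, j}) =
      (X i ^ (m + 1) : MvPolynomial (Fin r) k) • eK k {j} -
        (X j ^ (m + 1) : MvPolynomial (Fin r) k) • eK k {i} := by
  rw [koszulD_eK, Finset.sum_pair hij.ne, Finset.erase_insert (by simpa using hij.ne),
    Finset.erase_insert_of_ne hij.ne, Finset.erase_singleton, insert_empty_eq,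
    Finset.filter_singleton, Finset.filter_singleton, if_neg (not_lt.mpr hij.le), if_pos hij]
  simp [sub_eq_add_neg]

lemma koszulD_eK_triple {i j l : Fin r} (hij : i < j) (hjl : j < l) :
    koszulD k r m (eK k {i, j, l}) =
      (X i ^ (m + 1) : MvPolynomial (Fin r) k) • eK k {j, l} -
        (X j ^ (m + 1) : MvPolynomial (Fin r) k) • eK k {i, l} +
        (X l ^ (m + 1) : MvPolynomial (Fin r) k) • eK k {i, j} := by
  have hil := hij.trans hjl
  have hi : i ∉ ({j, l} : Finset (Fin r)) := by simp [hij.ne, hil.ne]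
  rw [koszulD_eK, Finset.sum_insert hi, Finset.sum_pair hjl.ne, Finset.erase_insert hi,
    Finset.erase_insert_of_ne hij.ne, Finset.erase_insert (by simpa using hjl.ne),
    Finset.erase_insert_of_ne hil.ne, Finset.erase_insert_of_ne hjl.ne, Finset.erase_singleton,
    insert_empty_eq]
  simp only [Finset.filter_insert, Finset.filter_singleton, hij, hjl, hil, not_lt.mpr hij.le,
    not_lt.mpr hjl.le, not_lt.mpr hil.le, if_true, if_false]
  simp [Finset.card_pair hij.ne, sub_eq_add_neg, add_assoc]

lemma koszulD_eq_zero_of_forall_nonempty {f : Kmod k r} (hf : ∀ S, S.Nonempty → f S = 0) :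
    koszulD k r m f = 0 := by
  funext T
  rw [koszulD_apply]
  exact Finset.sum_eq_zero fun i _ => by rw [hf _ (Finset.insert_nonempty i T), mul_zero]

lemma neg_one_pow_card_filter_insert {T : Finset (Fin r)} {i : Fin r} (hi : i ∉ T) (j : Fin r) :
    (-1 : MvPolynomial (Fin r) k) ^ ((insert i T).filter (· < j)).card =
      (if i < j then -1 else 1) * (-1) ^ (T.filter (· < j)).card := by
  rw [Finset.filter_insert]
  split_ifs with hij
  · rw [Finset.card_insert_of_notMem fun h => hi (Finset.mem_filter.mp h).1, pow_succ, mul_comm]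
  · rw [one_mul]

lemma koszulD_koszulD (f : Kmod k r) : koszulD k r m (koszulD k r m f) = 0 := by
  funext T
  simp only [koszulD_apply, Finset.mul_sum, Pi.zero_apply]
  rw [← Finset.sum_sum_erase_eq_zero_of_antisymm (s := Tᶜ) (g := fun i j =>
    (-1 : MvPolynomial (Fin r) k) ^ (T.filter (· < i)).card * X i ^ (m + 1) *
      ((-1) ^ ((insert i T).filter (· < j)).card * X j ^ (m + 1) * f (insert j (insert i T))))]
  · exact Finset.sum_congr rfl fun i _ => by rw [Finset.compl_insert]
  · intro i hi j hj hij
    simp only [Finset.mem_compl] at hi hj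
    rw [neg_one_pow_card_filter_insert hi, neg_one_pow_card_filter_insert hj,
      Finset.insert_comm]
    rcases hij.lt_or_gt with h | h
    · simp only [h, not_lt.mpr h.le, if_true, if_false]
      ring
    · simp only [h, not_lt.mpr h.le, if_true, if_false]
      ring

end Koszul

section Homogeneity
variable {k : Type*} [Field k] {r m n : ℕ}

lemma isHomogC_iff {f : Kmod k r} :
    IsHomogC m n f ↔ ∀ S, ∀ d ∈ (f S).support, 2 * d.degree + (2 * m + 1) * S.card = n :=
  Iff.rfl

lemma isHomogC_eK (S : Finset (Fin r)) : IsHomogC m ((2 * m + 1) * S.card) (eK k S) := by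
  intro T d hd
  rw [eK_apply] at hd
  split_ifs at hd with h
  · obtain rfl : d = 0 := by simpa using hd
    simp [h]
  · simp at hd

lemma IsHomogC.sub {f g : Kmod k r} (hf : IsHomogC m n f) (hg : IsHomogC m n g) :
    IsHomogC m n (f - g) := by
  intro S d hd
  rcases Finset.mem_union.mp (support_sub _ _ _ hd) with hd | hd
  exacts [hf S d hd, hg S d hd]

lemma IsHomogC.koszulD {f : Kmod k r} (hf : IsHomogC m n f) :
    IsHomogC m (n + 1) (koszulD k r m f) := by
  rw [isHomogC_iff] at hf ⊢
  intro T d hd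
  rw [koszulD_apply] at hd
  obtain ⟨i, hi, hd⟩ := Finset.mem_biUnion.mp (support_sum hd)
  have hd' : d ∈ (X i ^ (m + 1) * f (insert i T)).support := by
    rw [mul_assoc] at hd
    rcases neg_one_pow_eq_or (MvPolynomial (Fin r) k) (T.filter (· < i)).card with h | h <;>
      simpa [h] using hd
  obtain ⟨e, he, rfl⟩ := exists_mem_support_of_mem_support_X_pow_mul hd'
  have := hf _ e he
  rw [Finset.card_insert_of_notMem (Finset.mem_compl.mp hi)] at this
  rw [map_add, Finsupp.degree_single]
  linarith

lemma IsHomogC.divMonomial {c : ℕ} {f : Kmod k r} (hf : IsHomogC m (n + 2 * c) f) (j : Fin r) :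
    IsHomogC m n (fun S => (f S).divMonomial (Finsupp.single j c)) := by
  rw [isHomogC_iff] at hf ⊢
  intro S d hd
  have := hf S _ (by simpa [mem_support_iff] using hd)
  rw [map_add, Finsupp.degree_single] at this
  linarith

lemma IsHomogC.eq_C_smul_eK_empty {f : Kmod k r} (hf : IsHomogC m 0 f) :
    f = (C (constantCoeff (f ∅)) : MvPolynomial (Fin r) k) • eK k ∅ := by
  rw [isHomogC_iff] at hf
  funext S
  rw [Pi.smul_apply, eK_apply, smul_eq_mul]
  split_ifs with hS
  · subst hS
    ext d
    rw [mul_one, coeff_C, constantCoeff_eq]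
    split_ifs with hd
    · rw [hd]
    · by_contra hne
      have := hf ∅ d (mem_support_iff.mpr hne)
      exact hd ((Finsupp.degree_eq_zero_iff d).mp (by simpa using this)).symm
  · rw [mul_zero]
    by_contra hne
    obtain ⟨d, hd⟩ := support_nonempty.mpr hne
    have := hf S d hd
    have : S.card = 0 := by nlinarith
    exact hS (Finset.card_eq_zero.mp this)

end Homogeneity

section ChainMap
variable {k : Type*} [Field k] {r m : ℕ}

lemma gamma_eK_empty (γ : Kmod k r →ₗ[MvPolynomial (Fin r) k] Kmod k r)
    (hlift : ∀ z : Kmod k r, koszulD k r m z = 0 →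
      constantCoeff (γ z ∅) = constantCoeff (z ∅))
    (hdeg : ∀ (n : ℕ) (f : Kmod k r), IsHomogC m n f → IsHomogC 0 n (γ f)) :
    γ (eK k ∅) = eK k ∅ := by
  have hhom : IsHomogC 0 0 (γ (eK k ∅)) := hdeg 0 _ (by simpa using isHomogC_eK (k := k) (m := m) ∅)
  rw [hhom.eq_C_smul_eK_empty, hlift _ koszulD_eK_empty, eK_apply, if_pos rfl, map_one, map_one,
    one_smul]

lemma sum_X_mul_gamma_eK_singleton (γ : Kmod k r →ₗ[MvPolynomial (Fin r) k] Kmod k r)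
    (hchain : γ ∘ₗ koszulD k r m = koszulD k r 0 ∘ₗ γ) (hγ₀ : γ (eK k ∅) = eK k ∅) (i : Fin r) :
    ∑ j, X j * γ (eK k {i}) {j} = X i ^ (m + 1) := by
  have h := LinearMap.congr_fun hchain (eK k {i})
  simp only [LinearMap.comp_apply, koszulD_eK_singleton, map_smul, hγ₀] at h
  have := congrFun h ∅
  simp only [koszulD_apply_empty, zero_add, pow_one, Pi.smul_apply, eK_apply, if_true,
    smul_eq_mul, mul_one] at this
  exact this.symm

lemma exists_koszulD_apply_singleton_eq_gamma_eK (γ : Kmod k r →ₗ[MvPolynomial (Fin r) k] Kmod k r)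
    (hchain : γ ∘ₗ koszulD k r m = koszulD k r 0 ∘ₗ γ)
    (hdeg : ∀ (n : ℕ) (f : Kmod k r), IsHomogC m n f → IsHomogC 0 n (γ f))
    {i₀ i₁ i₂ : Fin r} (h₀₁ : i₀ < i₁) (h₁₂ : i₁ < i₂)
    (hvan : ∀ S : Finset (Fin r), S.Nonempty → γ (koszulD k r m (eK k {i₀, i₁, i₂})) S = 0) :
    ∃ α : Kmod k r, ∀ j, koszulD k r 0 α {j} = γ (eK k {i₂}) {j} := by
  set P := γ (eK k {i₁, i₂})
  have hrel : ∀ S : Finset (Fin r), S.Nonempty → X i₀ ^ (m + 1) * P S =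
      X i₁ ^ (m + 1) * γ (eK k {i₀, i₂}) S + X i₂ ^ (m + 1) * -γ (eK k {i₀, i₁}) S := by
    intro S hS
    have := hvan S hS
    rw [koszulD_eK_triple h₀₁ h₁₂, map_add, map_sub, map_smul, map_smul, map_smul] at this
    simp only [Pi.add_apply, Pi.sub_apply, Pi.smul_apply, smul_eq_mul] at this
    linear_combination this
  set α : Kmod k r := fun S => (P S).divMonomial (Finsupp.single i₁ (m + 1))
  set β : Kmod k r := fun S =>
    ((P S).modMonomial (Finsupp.single i₁ (m + 1))).divMonomial (Finsupp.single i₂ (m + 1))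
  have hsplit : koszulD k r 0 P =
      (X i₁ ^ (m + 1) : MvPolynomial (Fin r) k) • koszulD k r 0 α +
        (X i₂ ^ (m + 1) : MvPolynomial (Fin r) k) • koszulD k r 0 β := by
    rw [← map_smul, ← map_smul, ← map_add, ← sub_eq_zero, ← map_sub]
    refine koszulD_eq_zero_of_forall_nonempty fun S hS => ?_
    rw [Pi.sub_apply, sub_eq_zero]
    exact eq_X_pow_mul_add_X_pow_mul_of_X_pow_mul_eq h₀₁.ne (h₀₁.trans h₁₂).ne (hrel S hS)
  have hpair : koszulD k r 0 P =
      (X i₁ ^ (m + 1) : MvPolynomial (Fin r) k) • γ (eK k {i₂}) -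
        (X i₂ ^ (m + 1) : MvPolynomial (Fin r) k) • γ (eK k {i₁}) := by
    rw [← LinearMap.comp_apply (koszulD k r 0), ← hchain, LinearMap.comp_apply,
      koszulD_eK_pair h₁₂, map_sub, map_smul, map_smul]
  have hhom : IsHomogC 0 (2 * m + 1) (koszulD k r 0 α - γ (eK k {i₂})) := by
    have hP : IsHomogC 0 (2 * m + 2 * (m + 1)) P := by
      have := hdeg _ _ (isHomogC_eK (k := k) (m := m) {i₁, i₂})
      rwa [Finset.card_pair h₁₂.ne, show (2 * m + 1) * 2 = 2 * m + 2 * (m + 1) by ring] at this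
    have hY : IsHomogC 0 (2 * m + 1) (γ (eK k {i₂})) := by
      simpa using hdeg _ _ (isHomogC_eK (k := k) (m := m) {i₂})
    exact (hP.divMonomial i₁).koszulD.sub hY
  refine ⟨α, fun j => ?_⟩
  rw [← sub_eq_zero]
  -- in word length one, `d α - γ(s_{i₂})` has degree `m`: too small for `X i₂ ^ (m + 1)`
  refine eq_zero_of_X_pow_mul_eq_X_pow_mul h₁₂.ne (c := m + 1)
    (Q := -(koszulD k r 0 β {j} + γ (eK k {i₁}) {j})) (fun ν hν => ?_) ?_
  · have := (isHomogC_iff.mp hhom) {j} ν hν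
    have := Finsupp.le_degree i₂ ν
    simp only [Finset.card_singleton] at *
    omega
  · have := congrFun (hsplit.symm.trans hpair) {j}
    simp only [Pi.add_apply, Pi.sub_apply, Pi.smul_apply, smul_eq_mul] at this
    linear_combination this

lemma exists_gamma_koszulD_eK_triple_ne_zero (γ : Kmod k r →ₗ[MvPolynomial (Fin r) k] Kmod k r)
    (hchain : γ ∘ₗ koszulD k r m = koszulD k r 0 ∘ₗ γ)
    (hdeg : ∀ (n : ℕ) (f : Kmod k r), IsHomogC m n f → IsHomogC 0 n (γ f))
    (hγ₀ : γ (eK k ∅) = eK k ∅) {i₀ i₁ i₂ : Fin r} (h₀₁ : i₀ < i₁) (h₁₂ : i₁ < i₂) :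
    ∃ S : Finset (Fin r), S.Nonempty ∧ γ (koszulD k r m (eK k {i₀, i₁, i₂})) S ≠ 0 := by
  by_contra! hvan
  obtain ⟨α, hα⟩ := exists_koszulD_apply_singleton_eq_gamma_eK γ hchain hdeg h₀₁ h₁₂ hvan
  have hdd := congrFun (koszulD_koszulD (m := 0) α) ∅
  simp only [koszulD_apply_empty, zero_add, pow_one, hα, Pi.zero_apply] at hdd
  rw [sum_X_mul_gamma_eK_singleton γ hchain hγ₀ i₂] at hdd
  exact pow_ne_zero _ (X_ne_zero i₂) hdd

lemma eq_zero_of_gamma_smul_eK_triple_add_eq_zero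
    (γ : Kmod k r →ₗ[MvPolynomial (Fin r) k] Kmod k r)
    (hchain : γ ∘ₗ koszulD k r m = koszulD k r 0 ∘ₗ γ)
    (hdeg : ∀ (n : ℕ) (f : Kmod k r), IsHomogC m n f → IsHomogC 0 n (γ f))
    (hγ₀ : γ (eK k ∅) = eK k ∅) {i₀ i₁ i₂ : Fin r} (h₀₁ : i₀ < i₁) (h₁₂ : i₁ < i₂)
    {b : MvPolynomial (Fin r) k} {a : Fin r → MvPolynomial (Fin r) k}
    (h : γ (b • eK k {i₀, i₁, i₂} + ∑ i, a i • eK k {i}) = 0) : b = 0 := by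
  obtain ⟨S, hS, hne⟩ := exists_gamma_koszulD_eK_triple_ne_zero γ hchain hdeg hγ₀ h₀₁ h₁₂
  have hγd := LinearMap.congr_fun hchain (b • eK k {i₀, i₁, i₂} + ∑ i, a i • eK k {i})
  rw [LinearMap.comp_apply, LinearMap.comp_apply, h, map_zero, map_add, map_smul, map_sum] at hγd
  simp only [map_smul, koszulD_eK_singleton, smul_smul, map_add, map_sum, hγ₀] at hγd
  have := congrFun hγd S
  simp only [Pi.add_apply, Pi.smul_apply, Finset.sum_apply, eK_apply, if_neg hS.ne_empty,
    smul_eq_mul, mul_zero, Finset.sum_const_zero, add_zero, Pi.zero_apply] at this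
  exact (mul_eq_zero.mp this).resolve_right hne

open Matrix in
lemma eq_zero_of_gamma_sum_smul_eK_singleton_eq_zero
    (γ : Kmod k r →ₗ[MvPolynomial (Fin r) k] Kmod k r)
    (hchain : γ ∘ₗ koszulD k r m = koszulD k r 0 ∘ₗ γ) (hγ₀ : γ (eK k ∅) = eK k ∅)
    {a : Fin r → MvPolynomial (Fin r) k} (h : γ (∑ i, a i • eK k {i}) = 0) : a = 0 := by
  set G : Matrix (Fin r) (Fin r) (MvPolynomial (Fin r) k) := of fun i j => γ (eK k {i}) {j}
  have hG : G *ᵥ (fun j => X j) = fun i => X i ^ (m + 1) := by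
    funext i
    rw [← sum_X_mul_gamma_eK_singleton γ hchain hγ₀ i]
    simp [G, mulVec, dotProduct, mul_comm]
  have hdet : G.det ≠ 0 := fun h0 => by
    simpa [h0] using MvPolynomial.coeff_det_eq_one_of_mulVec_X_eq hG
  have haG : a ᵥ* G = 0 := by
    funext j
    simpa [G, vecMul, dotProduct] using congrFun h {j}
  by_contra ha
  exact hdet (exists_vecMul_eq_zero_iff.mp ⟨a, ha, haG⟩)

end ChainMap

theorem statement5 (k : Type*) [Field k] (r m : ℕ) (hr : 3 ≤ r)
    (γ : Kmod k r →ₗ[MvPolynomial (Fin r) k] Kmod k r)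
    -- γ commutes with the differentials
    (hchain : γ ∘ₗ koszulD k r m = koszulD k r 0 ∘ₗ γ)
    -- γ lifts the canonical projection H(K_r(m)) = R/(t^{m+1}) → H(K_r(0)) = k
    (hlift : ∀ z : Kmod k r, koszulD k r m z = 0 →
      constantCoeff (γ z ∅) = constantCoeff (z ∅))
    -- γ preserves degrees (deg tᵢ = 2, deg sᵢ^m = 2m+1, deg sᵢ^0 = 1)
    (hdeg : ∀ (n : ℕ) (f : Kmod k r), IsHomogC m n f → IsHomogC 0 n (γ f)) :
    ∀ x ∈ Submodule.span (MvPolynomial (Fin r) k)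
      (insert
        (eK k ({⟨0, by omega⟩, ⟨1, by omega⟩, ⟨2, by omega⟩} : Finset (Fin r)))
        {f : Kmod k r | ∃ i : Fin r, f = eK k {i}}),
      γ x = 0 → x = 0 := by
  intro x hx hγx
  have hγ₀ := gamma_eK_empty γ hlift hdeg
  obtain ⟨b, z, hz, rfl⟩ := Submodule.mem_span_insert.mp hx
  obtain ⟨a, rfl⟩ := (Submodule.mem_span_range_iff_exists_fun _).mp
    (by simpa only [Set.range, eq_comm] using hz)
  obtain rfl := eq_zero_of_gamma_smul_eK_triple_add_eq_zero γ hchain hdeg hγ₀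
    (Fin.mk_lt_mk.mpr zero_lt_one) (Fin.mk_lt_mk.mpr one_lt_two) hγx
  rw [zero_smul, zero_add] at hγx ⊢
  obtain rfl := eq_zero_of_gamma_sum_smul_eK_singleton_eq_zero γ hchain hγ₀ hγx
  simp
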